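/- arXiv:1105.2576 — 7 statements merged into one kernel-verified Lean document; each statement's English description precedes it below -/
import Mathlib

section
/- Prefix property of XPEG parsing (Theorem 1): for every typed parsing expression e : PExp α, every string s, every step count m, every semantic value v and every string s', if ⟦e,s⟧ ⇒ (m, ok (v, s')) then s' is a suffix of s. -/
/-- Typed parsing expressions (XPEG expressions) over non-terminals `N`,
terminals `char` and semantic-value types `Ptype` for non-terminals. -/
inductive PExp (N char : Type) (Ptype : N → Type) : Type → Type 1 where
  | empty : PExp N char Ptype PUnit
  | anyChar : PExp N char Ptype char
  | terminal (a : char) : PExp N char Ptype char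
  | nonTerminal (A : N) : PExp N char Ptype (Ptype A)
  | seq {α β : Type} : PExp N char Ptype α → PExp N char Ptype β → PExp N char Ptype (α × β)
  | choice {α : Type} : PExp N char Ptype α → PExp N char Ptype α → PExp N char Ptype α
  | star {α : Type} : PExp N char Ptype α → PExp N char Ptype (List α)
  | pnot {α : Type} : PExp N char Ptype α → PExp N char Ptype PUnit
  | action {α β : Type} : PExp N char Ptype α → (α → β) → PExp N char Ptype β

/-- Big-step semantics of XPEGs: `Sem Pexp e s n r` means `⟦e,s⟧ ⇒ (n, r)`.
A result `none` is failure `⊥`; `some (v, s')` is success `ok (v, s')`. -/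
inductive Sem {N char : Type} {Ptype : N → Type}
    (Pexp : ∀ A : N, PExp N char Ptype (Ptype A)) :
    ∀ {α : Type}, PExp N char Ptype α → List char → ℕ → Option (α × List char) → Prop where
  | empty (s : List char) : Sem Pexp .empty s 1 (some (PUnit.unit, s))
  | nonTerminal {A : N} {s : List char} {m : ℕ} {r : Option (Ptype A × List char)} :
      Sem Pexp (Pexp A) s m r → Sem Pexp (.nonTerminal A) s (m + 1) r
  | anyCharOk (x : char) (xs : List char) : Sem Pexp .anyChar (x :: xs) 1 (some (x, xs))
  | anyCharFail : Sem Pexp .anyChar [] 1 none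
  | terminalOk (x : char) (xs : List char) : Sem Pexp (.terminal x) (x :: xs) 1 (some (x, xs))
  | terminalNil (y : char) : Sem Pexp (.terminal y) [] 1 none
  | terminalMismatch {x y : char} (xs : List char) (h : x ≠ y) :
      Sem Pexp (.terminal y) (x :: xs) 1 none
  | seqFail₁ {α β : Type} {e1 : PExp N char Ptype α} {e2 : PExp N char Ptype β}
      {s : List char} {m : ℕ} :
      Sem Pexp e1 s m none → Sem Pexp (.seq e1 e2) s (m + 1) none
  | seqFail₂ {α β : Type} {e1 : PExp N char Ptype α} {e2 : PExp N char Ptype β}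
      {s s' : List char} {m n : ℕ} {v1 : α} :
      Sem Pexp e1 s m (some (v1, s')) → Sem Pexp e2 s' n none →
      Sem Pexp (.seq e1 e2) s (m + n + 1) none
  | seqOk {α β : Type} {e1 : PExp N char Ptype α} {e2 : PExp N char Ptype β}
      {s s' s'' : List char} {m n : ℕ} {v1 : α} {v2 : β} :
      Sem Pexp e1 s m (some (v1, s')) → Sem Pexp e2 s' n (some (v2, s'')) →
      Sem Pexp (.seq e1 e2) s (m + n + 1) (some ((v1, v2), s''))
  | choiceOk {α : Type} {e1 e2 : PExp N char Ptype α} {s s' : List char} {m : ℕ} {v : α} :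
      Sem Pexp e1 s m (some (v, s')) → Sem Pexp (.choice e1 e2) s (m + 1) (some (v, s'))
  | choiceFail₁ {α : Type} {e1 e2 : PExp N char Ptype α} {s : List char} {m n : ℕ}
      {r : Option (α × List char)} :
      Sem Pexp e1 s m none → Sem Pexp e2 s n r → Sem Pexp (.choice e1 e2) s (m + n + 1) r
  | starBase {α : Type} {e : PExp N char Ptype α} {s : List char} {m : ℕ} :
      Sem Pexp e s m none → Sem Pexp (.star e) s (m + 1) (some ([], s))
  | starStep {α : Type} {e : PExp N char Ptype α} {s s' s'' : List char} {m n : ℕ}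
      {v : α} {vs : List α} :
      Sem Pexp e s m (some (v, s')) → Sem Pexp (.star e) s' n (some (vs, s'')) →
      Sem Pexp (.star e) s (m + n + 1) (some (v :: vs, s''))
  | notOk {α : Type} {e : PExp N char Ptype α} {s : List char} {m : ℕ} :
      Sem Pexp e s m none → Sem Pexp (.pnot e) s (m + 1) (some (PUnit.unit, s))
  | notFail {α : Type} {e : PExp N char Ptype α} {s s' : List char} {m : ℕ} {v : α} :
      Sem Pexp e s m (some (v, s')) → Sem Pexp (.pnot e) s (m + 1) none
  | actionOk {α β : Type} {e : PExp N char Ptype α} {f : α → β} {s s' : List char}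
      {m : ℕ} {v : α} :
      Sem Pexp e s m (some (v, s')) → Sem Pexp (.action e f) s (m + 1) (some (f v, s'))
  | actionFail {α β : Type} {e : PExp N char Ptype α} {f : α → β} {s : List char} {m : ℕ} :
      Sem Pexp e s m none → Sem Pexp (.action e f) s (m + 1) none

theorem xpeg_suffix_aux {N char : Type} {Ptype : N → Type}
    (Pexp : ∀ A : N, PExp N char Ptype (Ptype A))
    {α : Type} {e : PExp N char Ptype α} {s : List char} {m : ℕ}
    {r : Option (α × List char)} (h : Sem Pexp e s m r) :
    ∀ v s', r = some (v, s') → s' <:+ s := by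
  induction h with
  | empty s => exact fun v s' h => by cases h; exact List.suffix_refl _
  | nonTerminal _ ih => exact ih
  | anyCharOk x xs => exact fun v s' h => by cases h; exact List.suffix_cons x xs
  | anyCharFail => simp
  | terminalOk x xs => exact fun v s' h => by cases h; exact List.suffix_cons x xs
  | terminalNil => simp
  | terminalMismatch => simp
  | seqFail₁ => simp
  | seqFail₂ => simp
  | seqOk h1 h2 ih1 ih2 =>
    exact fun v s' h => by cases h; exact (ih2 _ _ rfl).trans (ih1 _ _ rfl)
  | choiceOk _ ih => exact ih
  | choiceFail₁ _ _ _ ih => exact ih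
  | starBase => exact fun v s' h => by cases h; exact List.suffix_refl _
  | starStep h1 h2 ih1 ih2 =>
    exact fun v s' h => by cases h; exact (ih2 _ _ rfl).trans (ih1 _ _ rfl)
  | notOk => exact fun v s' h => by cases h; exact List.suffix_refl _
  | notFail => simp
  | actionOk _ ih => exact fun v s' h => by cases h; exact ih _ _ rfl
  | actionFail => simp

/-- **Theorem 1 (Prefix property of XPEG parsing).** If `⟦e,s⟧ ⇒ (m, ok (v, s'))`
then `s'` is a suffix of `s`. -/
theorem xpeg_parse_suffix {N char : Type} [Fintype N] {Ptype : N → Type}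
    (Pexp : ∀ A : N, PExp N char Ptype (Ptype A))
    {α : Type} (e : PExp N char Ptype α) (s : List char) (m : ℕ) (v : α) (s' : List char)
    (h : Sem Pexp e s m (some (v, s'))) : s' <:+ s := by
  exact xpeg_suffix_aux Pexp h v s' rfl
end

section
/- Unambiguity of XPEG parsing (Theorem 2): for every typed parsing expression e : PExp α and every string s, if ⟦e,s⟧ ⇒ (m1, r1) and ⟦e,s⟧ ⇒ (m2, r2) then m1 = m2 and r1 = r2; in other words the semantics relation is deterministic in both the step count and the result. -/
section Inversion

variable {N char : Type} {Ptype : N → Type}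
  (Pexp : ∀ A : N, PExp N char Ptype (Ptype A))

/-- Constructor-directed inversion specification for `Sem`. -/
def SemSpec : ∀ {α : Type}, PExp N char Ptype α → List char → ℕ →
    Option (α × List char) → Prop
  | _, .empty, s, n, r => n = 1 ∧ r = some (PUnit.unit, s)
  | _, .nonTerminal A, s, n, r => ∃ m, n = m + 1 ∧ Sem Pexp (Pexp A) s m r
  | _, .anyChar, s, n, r =>
      n = 1 ∧ ((∃ x xs, s = x :: xs ∧ r = some (x, xs)) ∨ (s = [] ∧ r = none))
  | _, .terminal y, s, n, r =>
      n = 1 ∧ ((∃ xs, s = y :: xs ∧ r = some (y, xs)) ∨ (s = [] ∧ r = none) ∨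
        (∃ x xs, s = x :: xs ∧ x ≠ y ∧ r = none))
  | _, .seq e1 e2, s, n, r =>
      (∃ m, Sem Pexp e1 s m none ∧ n = m + 1 ∧ r = none) ∨
      (∃ m k v1 s', Sem Pexp e1 s m (some (v1, s')) ∧ Sem Pexp e2 s' k none ∧
        n = m + k + 1 ∧ r = none) ∨
      (∃ m k v1 s' v2 s'', Sem Pexp e1 s m (some (v1, s')) ∧
        Sem Pexp e2 s' k (some (v2, s'')) ∧ n = m + k + 1 ∧ r = some ((v1, v2), s''))
  | _, .choice e1 e2, s, n, r =>
      (∃ m v s', Sem Pexp e1 s m (some (v, s')) ∧ n = m + 1 ∧ r = some (v, s')) ∨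
      (∃ m k, Sem Pexp e1 s m none ∧ Sem Pexp e2 s k r ∧ n = m + k + 1)
  | _, .star e, s, n, r =>
      (∃ m, Sem Pexp e s m none ∧ n = m + 1 ∧ r = some ([], s)) ∨
      (∃ m k v s' vs s'', Sem Pexp e s m (some (v, s')) ∧
        Sem Pexp (.star e) s' k (some (vs, s'')) ∧ n = m + k + 1 ∧ r = some (v :: vs, s''))
  | _, .pnot e, s, n, r =>
      (∃ m, Sem Pexp e s m none ∧ n = m + 1 ∧ r = some (PUnit.unit, s)) ∨
      (∃ m v s', Sem Pexp e s m (some (v, s')) ∧ n = m + 1 ∧ r = none)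
  | _, .action e f, s, n, r =>
      (∃ m v s', Sem Pexp e s m (some (v, s')) ∧ n = m + 1 ∧ r = some (f v, s')) ∨
      (∃ m, Sem Pexp e s m none ∧ n = m + 1 ∧ r = none)

theorem sem_spec {α : Type} {e : PExp N char Ptype α} {s : List char} {n : ℕ}
    {r : Option (α × List char)} (h : Sem Pexp e s n r) : SemSpec Pexp e s n r := by
  cases h <;> simp only [SemSpec] <;> aesop

end Inversion

/-- **Theorem 2 (Unambiguity of XPEG parsing).** The semantics relation is
deterministic in both the step count and the result. -/
theorem xpeg_unambiguous {N char : Type} [Fintype N] {Ptype : N → Type}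
    (Pexp : ∀ A : N, PExp N char Ptype (Ptype A))
    {α : Type} (e : PExp N char Ptype α) (s : List char)
    (m1 m2 : ℕ) (r1 r2 : Option (α × List char))
    (h1 : Sem Pexp e s m1 r1) (h2 : Sem Pexp e s m2 r2) : m1 = m2 ∧ r1 = r2 := by
  induction h1 generalizing m2 with
  | empty s =>
    obtain ⟨hn, hr⟩ := sem_spec Pexp h2
    exact ⟨hn.symm, hr.symm⟩
  | nonTerminal h ih =>
    obtain ⟨m, hn, hs⟩ := sem_spec Pexp h2
    obtain ⟨e1, e2⟩ := ih _ _ hs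
    exact ⟨by omega, e2⟩
  | anyCharOk x xs =>
    obtain ⟨hn, h | h⟩ := sem_spec Pexp h2
    · obtain ⟨x', xs', hs, hr⟩ := h
      cases hs; exact ⟨hn.symm, hr.symm⟩
    · exact absurd h.1 (by simp)
  | anyCharFail =>
    obtain ⟨hn, h | h⟩ := sem_spec Pexp h2
    · obtain ⟨x', xs', hs, hr⟩ := h; cases hs
    · exact ⟨hn.symm, h.2.symm⟩
  | terminalOk x xs =>
    obtain ⟨hn, h | h | h⟩ := sem_spec Pexp h2
    · obtain ⟨xs', hs, hr⟩ := h; cases hs; exact ⟨hn.symm, hr.symm⟩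
    · exact absurd h.1 (by simp)
    · obtain ⟨x', xs', hs, hne, hr⟩ := h; cases hs; exact absurd rfl hne
  | terminalNil y =>
    obtain ⟨hn, h | h | h⟩ := sem_spec Pexp h2
    · obtain ⟨xs', hs, hr⟩ := h; cases hs
    · exact ⟨hn.symm, h.2.symm⟩
    · obtain ⟨x', xs', hs, hne, hr⟩ := h; cases hs
  | terminalMismatch xs hne =>
    obtain ⟨hn, h | h | h⟩ := sem_spec Pexp h2
    · obtain ⟨xs', hs, hr⟩ := h; cases hs; exact absurd rfl hne
    · exact absurd h.1 (by simp)
    · obtain ⟨x', xs', hs, _, hr⟩ := h; exact ⟨hn.symm, hr.symm⟩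
  | seqFail₁ h ih =>
    obtain ⟨m, ha, hn, hr⟩ | ⟨m, k, v1, s', ha, hb, hn, hr⟩ |
        ⟨m, k, v1, s', v2, s'', ha, hb, hn, hr⟩ := sem_spec Pexp h2
    · obtain ⟨e1, _⟩ := ih _ _ ha; exact ⟨by omega, hr.symm⟩
    · obtain ⟨_, e2⟩ := ih _ _ ha; simp at e2
    · obtain ⟨_, e2⟩ := ih _ _ ha; simp at e2
  | seqFail₂ ha hb ih1 ih2 =>
    obtain ⟨m, ha', hn, hr⟩ | ⟨m, k, v1, s', ha', hb', hn, hr⟩ |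
        ⟨m, k, v1, s', v2, s'', ha', hb', hn, hr⟩ := sem_spec Pexp h2
    · obtain ⟨_, e2⟩ := ih1 _ _ ha'; simp at e2
    · obtain ⟨e1, e2⟩ := ih1 _ _ ha'
      simp only [Option.some.injEq, Prod.mk.injEq] at e2
      obtain ⟨ev, es⟩ := e2; subst ev; subst es
      obtain ⟨e3, _⟩ := ih2 _ _ hb'
      exact ⟨by omega, hr.symm⟩
    · obtain ⟨e1, e2⟩ := ih1 _ _ ha'
      simp only [Option.some.injEq, Prod.mk.injEq] at e2
      obtain ⟨ev, es⟩ := e2; subst ev; subst es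
      obtain ⟨_, e4⟩ := ih2 _ _ hb'; simp at e4
  | seqOk ha hb ih1 ih2 =>
    obtain ⟨m, ha', hn, hr⟩ | ⟨m, k, v1, s', ha', hb', hn, hr⟩ |
        ⟨m, k, v1, s', v2, s'', ha', hb', hn, hr⟩ := sem_spec Pexp h2
    · obtain ⟨_, e2⟩ := ih1 _ _ ha'; simp at e2
    · obtain ⟨e1, e2⟩ := ih1 _ _ ha'
      simp only [Option.some.injEq, Prod.mk.injEq] at e2
      obtain ⟨ev, es⟩ := e2; subst ev; subst es
      obtain ⟨_, e4⟩ := ih2 _ _ hb'; simp at e4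
    · obtain ⟨e1, e2⟩ := ih1 _ _ ha'
      simp only [Option.some.injEq, Prod.mk.injEq] at e2
      obtain ⟨ev, es⟩ := e2; subst ev; subst es
      obtain ⟨e3, e4⟩ := ih2 _ _ hb'
      simp only [Option.some.injEq, Prod.mk.injEq] at e4
      obtain ⟨ev2, es2⟩ := e4; subst ev2; subst es2
      exact ⟨by omega, hr.symm⟩
  | choiceOk h ih =>
    obtain ⟨m, v, s', ha, hn, hr⟩ | ⟨m, k, ha, hb, hn⟩ := sem_spec Pexp h2
    · obtain ⟨e1, e2⟩ := ih _ _ ha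
      exact ⟨by omega, by rw [hr, ← e2]⟩
    · obtain ⟨_, e2⟩ := ih _ _ ha; simp at e2
  | choiceFail₁ ha hb ih1 ih2 =>
    obtain ⟨m, v, s', ha', hn, hr⟩ | ⟨m, k, ha', hb', hn⟩ := sem_spec Pexp h2
    · obtain ⟨_, e2⟩ := ih1 _ _ ha'; simp at e2
    · obtain ⟨e1, _⟩ := ih1 _ _ ha'
      obtain ⟨e3, e4⟩ := ih2 _ _ hb'
      exact ⟨by omega, e4⟩
  | starBase h ih =>
    obtain ⟨m, ha, hn, hr⟩ | ⟨m, k, v, s', vs, s'', ha, hb, hn, hr⟩ := sem_spec Pexp h2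
    · obtain ⟨e1, _⟩ := ih _ _ ha; exact ⟨by omega, hr.symm⟩
    · obtain ⟨_, e2⟩ := ih _ _ ha; simp at e2
  | starStep ha hb ih1 ih2 =>
    obtain ⟨m, ha', hn, hr⟩ | ⟨m, k, v, s', vs, s'', ha', hb', hn, hr⟩ := sem_spec Pexp h2
    · obtain ⟨_, e2⟩ := ih1 _ _ ha'; simp at e2
    · obtain ⟨e1, e2⟩ := ih1 _ _ ha'
      simp only [Option.some.injEq, Prod.mk.injEq] at e2
      obtain ⟨ev, es⟩ := e2; subst ev; subst es
      obtain ⟨e3, e4⟩ := ih2 _ _ hb'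
      simp only [Option.some.injEq, Prod.mk.injEq] at e4
      obtain ⟨ev2, es2⟩ := e4; subst ev2; subst es2
      exact ⟨by omega, hr.symm⟩
  | notOk h ih =>
    obtain ⟨m, ha, hn, hr⟩ | ⟨m, v, s', ha, hn, hr⟩ := sem_spec Pexp h2
    · obtain ⟨e1, _⟩ := ih _ _ ha; exact ⟨by omega, hr.symm⟩
    · obtain ⟨_, e2⟩ := ih _ _ ha; simp at e2
  | notFail h ih =>
    obtain ⟨m, ha, hn, hr⟩ | ⟨m, v, s', ha, hn, hr⟩ := sem_spec Pexp h2
    · obtain ⟨_, e2⟩ := ih _ _ ha; simp at e2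
    · obtain ⟨e1, _⟩ := ih _ _ ha; exact ⟨by omega, hr.symm⟩
  | actionOk h ih =>
    obtain ⟨m, v, s', ha, hn, hr⟩ | ⟨m, ha, hn, hr⟩ := sem_spec Pexp h2
    · obtain ⟨e1, e2⟩ := ih _ _ ha
      simp only [Option.some.injEq, Prod.mk.injEq] at e2
      obtain ⟨ev, es⟩ := e2; subst ev; subst es
      exact ⟨by omega, hr.symm⟩
    · obtain ⟨_, e2⟩ := ih _ _ ha; simp at e2
  | actionFail h ih =>
    obtain ⟨m, v, s', ha, hn, hr⟩ | ⟨m, ha, hn, hr⟩ := sem_spec Pexp h2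
    · obtain ⟨_, e2⟩ := ih _ _ ha; simp at e2
    · obtain ⟨e1, _⟩ := ih _ _ ha; exact ⟨by omega, hr.symm⟩
end

section
/- Looping condition for repetition (Lemma 3): for every typed parsing expression e : PExp α, every string s, every step count m and every semantic value v, if ⟦e,s⟧ ⇒ (m, ok (v, s)) (i.e. e succeeds on s without consuming any input), then for no step count n and no result r does ⟦Star e, s⟧ ⇒ (n, r) hold, i.e. the semantics of Star e on s is undefined. -/
/-- Inversion statement for the big-step semantics, by recursion on the expression. -/
def InvStmt {N char : Type} {Ptype : N → Type}
    (Pexp : ∀ A : N, PExp N char Ptype (Ptype A)) :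
    ∀ {α : Type}, PExp N char Ptype α → List char → ℕ → Option (α × List char) → Prop
  | _, .empty, s, n, r => n = 1 ∧ r = some (PUnit.unit, s)
  | _, .nonTerminal A, s, n, r => ∃ m, n = m + 1 ∧ Sem Pexp (Pexp A) s m r
  | _, .anyChar, s, n, r =>
      n = 1 ∧ ((∃ x xs, s = x :: xs ∧ r = some (x, xs)) ∨ (s = [] ∧ r = none))
  | _, .terminal y, s, n, r =>
      n = 1 ∧ ((∃ xs, s = y :: xs ∧ r = some (y, xs)) ∨
        (r = none ∧ (s = [] ∨ ∃ x xs, s = x :: xs ∧ x ≠ y)))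
  | _, .seq e1 e2, s, n, r =>
      (∃ m, n = m + 1 ∧ r = none ∧ Sem Pexp e1 s m none) ∨
      (∃ m k s' v1, n = m + k + 1 ∧ Sem Pexp e1 s m (some (v1, s')) ∧
        ((r = none ∧ Sem Pexp e2 s' k none) ∨
         (∃ v2 s'', r = some ((v1, v2), s'') ∧ Sem Pexp e2 s' k (some (v2, s'')))))
  | _, .choice e1 e2, s, n, r =>
      (∃ m v s', n = m + 1 ∧ r = some (v, s') ∧ Sem Pexp e1 s m (some (v, s'))) ∨
      (∃ m k, n = m + k + 1 ∧ Sem Pexp e1 s m none ∧ Sem Pexp e2 s k r)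
  | _, .star e, s, n, r =>
      (∃ m, n = m + 1 ∧ r = some ([], s) ∧ Sem Pexp e s m none) ∨
      (∃ m k v s' vs s'', n = m + k + 1 ∧ r = some (v :: vs, s'') ∧
        Sem Pexp e s m (some (v, s')) ∧ Sem Pexp (.star e) s' k (some (vs, s'')))
  | _, .pnot e, s, n, r =>
      (∃ m, n = m + 1 ∧ r = some (PUnit.unit, s) ∧ Sem Pexp e s m none) ∨
      (∃ m v s', n = m + 1 ∧ r = none ∧ Sem Pexp e s m (some (v, s')))
  | _, .action e f, s, n, r =>
      (∃ m v s', n = m + 1 ∧ r = some (f v, s') ∧ Sem Pexp e s m (some (v, s'))) ∨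
      (∃ m, n = m + 1 ∧ r = none ∧ Sem Pexp e s m none)

theorem sem_inv {N char : Type} {Ptype : N → Type}
    {Pexp : ∀ A : N, PExp N char Ptype (Ptype A)}
    {α : Type} {e : PExp N char Ptype α} {s : List char} {n : ℕ}
    {r : Option (α × List char)} (h : Sem Pexp e s n r) : InvStmt Pexp e s n r := by
  cases h with
  | empty s => exact ⟨rfl, rfl⟩
  | nonTerminal h => exact ⟨_, rfl, h⟩
  | anyCharOk x xs => exact ⟨rfl, .inl ⟨x, xs, rfl, rfl⟩⟩
  | anyCharFail => exact ⟨rfl, .inr ⟨rfl, rfl⟩⟩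
  | terminalOk x xs => exact ⟨rfl, .inl ⟨xs, rfl, rfl⟩⟩
  | terminalNil y => exact ⟨rfl, .inr ⟨rfl, .inl rfl⟩⟩
  | terminalMismatch xs hne => exact ⟨rfl, .inr ⟨rfl, .inr ⟨_, xs, rfl, hne⟩⟩⟩
  | seqFail₁ h => exact .inl ⟨_, rfl, rfl, h⟩
  | seqFail₂ h1 h2 => exact .inr ⟨_, _, _, _, rfl, h1, .inl ⟨rfl, h2⟩⟩
  | seqOk h1 h2 => exact .inr ⟨_, _, _, _, rfl, h1, .inr ⟨_, _, rfl, h2⟩⟩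
  | choiceOk h => exact .inl ⟨_, _, _, rfl, rfl, h⟩
  | choiceFail₁ h1 h2 => exact .inr ⟨_, _, rfl, h1, h2⟩
  | starBase h => exact .inl ⟨_, rfl, rfl, h⟩
  | starStep h1 h2 => exact .inr ⟨_, _, _, _, _, _, rfl, rfl, h1, h2⟩
  | notOk h => exact .inl ⟨_, rfl, rfl, h⟩
  | notFail h => exact .inr ⟨_, _, _, rfl, rfl, h⟩
  | actionOk h => exact .inl ⟨_, _, _, rfl, rfl, h⟩
  | actionFail h => exact .inr ⟨_, rfl, rfl, h⟩

theorem sem_det {N char : Type} {Ptype : N → Type}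
    {Pexp : ∀ A : N, PExp N char Ptype (Ptype A)}
    {α : Type} {e : PExp N char Ptype α} {s : List char} {m : ℕ}
    {r : Option (α × List char)}
    (h1 : Sem Pexp e s m r) :
    ∀ {m' : ℕ} {r' : Option (α × List char)}, Sem Pexp e s m' r' → r = r' := by
  induction h1 with
  | empty s =>
      intro m' r' h2; exact (sem_inv h2).2.symm
  | nonTerminal h ih =>
      intro m' r' h2
      obtain ⟨k, -, h'⟩ := sem_inv h2
      exact ih h'
  | anyCharOk x xs =>
      intro m' r' h2
      rcases sem_inv h2 with ⟨-, ⟨x', xs', he, hr⟩ | ⟨he, -⟩⟩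
      · cases he; exact hr.symm
      · cases he
  | anyCharFail =>
      intro m' r' h2
      rcases sem_inv h2 with ⟨-, ⟨x', xs', he, -⟩ | ⟨-, hr⟩⟩
      · cases he
      · exact hr.symm
  | terminalOk x xs =>
      intro m' r' h2
      rcases sem_inv h2 with ⟨-, ⟨xs', he, hr⟩ | ⟨hr, he | ⟨x', xs', he, hne⟩⟩⟩
      · cases he; exact hr.symm
      · cases he
      · cases he; exact absurd rfl hne
  | terminalNil y =>
      intro m' r' h2
      rcases sem_inv h2 with ⟨-, ⟨xs', he, -⟩ | ⟨hr, -⟩⟩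
      · cases he
      · exact hr.symm
  | terminalMismatch xs hne =>
      intro m' r' h2
      rcases sem_inv h2 with ⟨-, ⟨xs', he, -⟩ | ⟨hr, -⟩⟩
      · cases he; exact absurd rfl hne
      · exact hr.symm
  | seqFail₁ h ih =>
      intro m' r' h2
      rcases sem_inv h2 with ⟨k, -, hr, -⟩ | ⟨k, k', s', v1, -, h1', -⟩
      · exact hr.symm
      · exact absurd (ih h1') (by simp)
  | seqFail₂ ha hb iha ihb =>
      intro m' r' h2
      rcases sem_inv h2 with ⟨k, -, hr, h1'⟩ | ⟨k, k', s', v1, -, h1', ⟨hr, h2'⟩ | ⟨v2, s'', hr, h2'⟩⟩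
      · exact hr.symm
      · exact hr.symm
      · have := iha h1'
        injection this with this; injection this with hv hs
        subst hv; subst hs
        exact absurd (ihb h2') (by simp)
  | seqOk ha hb iha ihb =>
      intro m' r' h2
      rcases sem_inv h2 with ⟨k, -, hr, h1'⟩ | ⟨k, k', s', v1, -, h1', ⟨hr, h2'⟩ | ⟨v2, s'', hr, h2'⟩⟩
      · exact absurd (iha h1') (by simp)
      · have := iha h1'
        injection this with this; injection this with hv hs
        subst hv; subst hs
        exact absurd (ihb h2') (by simp)
      · have := iha h1'
        injection this with this; injection this with hv hs
        subst hv; subst hs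
        have := ihb h2'
        injection this with this; injection this with hv2 hs2
        subst hv2; subst hs2
        exact hr.symm
  | choiceOk h ih =>
      intro m' r' h2
      rcases sem_inv h2 with ⟨k, v', s', -, hr, h1'⟩ | ⟨k, k', -, h1', h2'⟩
      · rw [hr]; exact ih h1'
      · exact absurd (ih h1') (by simp)
  | choiceFail₁ ha hb iha ihb =>
      intro m' r' h2
      rcases sem_inv h2 with ⟨k, v', s', -, hr, h1'⟩ | ⟨k, k', -, h1', h2'⟩
      · exact absurd (iha h1').symm (by simp)
      · exact ihb h2'
  | starBase h ih =>
      intro m' r' h2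
      rcases sem_inv h2 with ⟨k, -, hr, -⟩ | ⟨k, k', v', s', vs', s'', -, hr, h1', -⟩
      · exact hr.symm
      · exact absurd (ih h1') (by simp)
  | starStep ha hb iha ihb =>
      intro m' r' h2
      rcases sem_inv h2 with ⟨k, -, hr, h1'⟩ | ⟨k, k', v', s', vs', s'', -, hr, h1', h2'⟩
      · exact absurd (iha h1') (by simp)
      · have := iha h1'
        injection this with this; injection this with hv hs
        subst hv; subst hs
        have := ihb h2'
        injection this with this; injection this with hv2 hs2
        subst hv2; subst hs2
        exact hr.symm
  | notOk h ih =>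
      intro m' r' h2
      rcases sem_inv h2 with ⟨k, -, hr, -⟩ | ⟨k, v', s', -, hr, h1'⟩
      · exact hr.symm
      · exact absurd (ih h1') (by simp)
  | notFail h ih =>
      intro m' r' h2
      rcases sem_inv h2 with ⟨k, -, hr, h1'⟩ | ⟨k, v', s', -, hr, -⟩
      · exact absurd (ih h1') (by simp)
      · exact hr.symm
  | actionOk h ih =>
      intro m' r' h2
      rcases sem_inv h2 with ⟨k, v', s', -, hr, h1'⟩ | ⟨k, -, hr, h1'⟩
      · have := ih h1'
        injection this with this; injection this with hv hs
        subst hv; subst hs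
        exact hr.symm
      · exact absurd (ih h1') (by simp)
  | actionFail h ih =>
      intro m' r' h2
      rcases sem_inv h2 with ⟨k, v', s', -, hr, h1'⟩ | ⟨k, -, hr, -⟩
      · exact absurd (ih h1').symm (by simp)
      · exact hr.symm

/-- **Lemma 3 (Looping condition for repetition).** If `e` succeeds on `s` without
consuming any input, then the semantics of `Star e` on `s` is undefined. -/
theorem xpeg_star_loop {N char : Type} [Fintype N] {Ptype : N → Type}
    (Pexp : ∀ A : N, PExp N char Ptype (Ptype A))
    {α : Type} (e : PExp N char Ptype α) (s : List char) (m : ℕ) (v : α)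
    (h : Sem Pexp e s m (some (v, s))) :
    ∀ (n : ℕ) (r : Option (List α × List char)), ¬ Sem Pexp (.star e) s n r := by
  intro n
  induction n using Nat.strong_induction_on with
  | _ n ih =>
    intro r hstar
    rcases sem_inv hstar with ⟨k, -, -, hfail⟩ | ⟨k, k', v', s', vs', s'', hn, -, h1, h2⟩
    · exact absurd (sem_det h hfail) (by simp)
    · have := sem_det h h1
      injection this with this; injection this with hv hs
      subst hs
      exact ih k' (by omega) _ h2
end

section
/- Soundness of the property '0' (Lemma 4, first item): for every parsing expression e, every string s and every step count n, if ⟦e,s⟧ ⇒ (n, ok s) (e succeeds on s leaving the whole input s unconsumed), then e ∈ P_0. -/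
/-- Untyped parsing expressions `Δ` over non-terminals `N` and terminals `char`. -/
inductive Delta (N char : Type) : Type where
  | eps : Delta N char
  | anyChar : Delta N char
  | terminal (a : char) : Delta N char
  | nonTerminal (A : N) : Delta N char
  | seq (e1 e2 : Delta N char) : Delta N char
  | choice (e1 e2 : Delta N char) : Delta N char
  | star (e : Delta N char) : Delta N char
  | pnot (e : Delta N char) : Delta N char
  deriving DecidableEq

/-- Big-step semantics of PEGs: `USem P e s n r` means `⟦e,s⟧ ⇒ (n, r)`.
A result `none` is failure `⊥`; `some s'` is success `ok s'`. -/
inductive USem {N char : Type} (P : N → Delta N char) :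
    Delta N char → List char → ℕ → Option (List char) → Prop where
  | eps (s : List char) : USem P .eps s 1 (some s)
  | nonTerminal {A : N} {s : List char} {m : ℕ} {r : Option (List char)} :
      USem P (P A) s m r → USem P (.nonTerminal A) s (m + 1) r
  | anyCharOk (x : char) (xs : List char) : USem P .anyChar (x :: xs) 1 (some xs)
  | anyCharFail : USem P .anyChar [] 1 none
  | terminalOk (a : char) (xs : List char) : USem P (.terminal a) (a :: xs) 1 (some xs)
  | terminalNil (a : char) : USem P (.terminal a) [] 1 none
  | terminalMismatch {x a : char} (xs : List char) (h : x ≠ a) :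
      USem P (.terminal a) (x :: xs) 1 none
  | seqFail₁ {e1 e2 : Delta N char} {s : List char} {m : ℕ} :
      USem P e1 s m none → USem P (.seq e1 e2) s (m + 1) none
  | seqNext {e1 e2 : Delta N char} {s s' : List char} {m n : ℕ} {r : Option (List char)} :
      USem P e1 s m (some s') → USem P e2 s' n r → USem P (.seq e1 e2) s (m + n + 1) r
  | choiceOk {e1 e2 : Delta N char} {s s' : List char} {m : ℕ} :
      USem P e1 s m (some s') → USem P (.choice e1 e2) s (m + 1) (some s')
  | choiceFail₁ {e1 e2 : Delta N char} {s : List char} {m n : ℕ} {r : Option (List char)} :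
      USem P e1 s m none → USem P e2 s n r → USem P (.choice e1 e2) s (m + n + 1) r
  | starBase {e : Delta N char} {s : List char} {m : ℕ} :
      USem P e s m none → USem P (.star e) s (m + 1) (some s)
  | starStep {e : Delta N char} {s s' s'' : List char} {m n : ℕ} :
      USem P e s m (some s') → USem P (.star e) s' n (some s'') →
      USem P (.star e) s (m + n + 1) (some s'')
  | notOk {e : Delta N char} {s : List char} {m : ℕ} :
      USem P e s m none → USem P (.pnot e) s (m + 1) (some s)
  | notFail {e : Delta N char} {s s' : List char} {m : ℕ} :
      USem P e s m (some s') → USem P (.pnot e) s (m + 1) none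

/-- Labels for the three expression properties: `zero` = "may succeed consuming no
input" (P₀), `pos` = "may succeed consuming some input" (P_{>0}), `fail` = "may fail" (P⊥). -/
inductive PProp : Type where
  | zero : PProp
  | pos : PProp
  | fail : PProp
  deriving DecidableEq

/-- The three property sets P₀, P_{>0} and P⊥, given as the least family of sets
closed under the inference rules of the property analysis.  (Disjunctive rules of
the analysis are split into several constructors, which generates the same least
family of sets.) -/
inductive HasProp {N char : Type} (P : N → Delta N char) : Delta N char → PProp → Prop where
  | eps : HasProp P .eps .zero
  | anyCharPos : HasProp P .anyChar .pos
  | anyCharFail : HasProp P .anyChar .fail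
  | terminalPos (a : char) : HasProp P (.terminal a) .pos
  | terminalFail (a : char) : HasProp P (.terminal a) .fail
  | starZero {e : Delta N char} : HasProp P e .fail → HasProp P (.star e) .zero
  | starPos {e : Delta N char} : HasProp P e .pos → HasProp P (.star e) .pos
  | nonTerminal {A : N} {p : PProp} : HasProp P (P A) p → HasProp P (.nonTerminal A) p
  -- e1; e2 ∈ P⊥ if e1 ∈ P⊥ or (e1 ∈ P₀ ∪ P_{>0} and e2 ∈ P⊥)
  | seqFail₁ {e1 e2 : Delta N char} : HasProp P e1 .fail → HasProp P (.seq e1 e2) .fail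
  | seqFail₂ {e1 e2 : Delta N char} :
      HasProp P e1 .zero → HasProp P e2 .fail → HasProp P (.seq e1 e2) .fail
  | seqFail₃ {e1 e2 : Delta N char} :
      HasProp P e1 .pos → HasProp P e2 .fail → HasProp P (.seq e1 e2) .fail
  -- e1; e2 ∈ P_{>0} if (e1 ∈ P_{>0} and e2 ∈ P₀ ∪ P_{>0}) or (e1 ∈ P₀ ∪ P_{>0} and e2 ∈ P_{>0})
  | seqPos₁ {e1 e2 : Delta N char} :
      HasProp P e1 .pos → HasProp P e2 .zero → HasProp P (.seq e1 e2) .pos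
  | seqPos₂ {e1 e2 : Delta N char} :
      HasProp P e1 .pos → HasProp P e2 .pos → HasProp P (.seq e1 e2) .pos
  | seqPos₃ {e1 e2 : Delta N char} :
      HasProp P e1 .zero → HasProp P e2 .pos → HasProp P (.seq e1 e2) .pos
  | seqZero {e1 e2 : Delta N char} :
      HasProp P e1 .zero → HasProp P e2 .zero → HasProp P (.seq e1 e2) .zero
  -- e1 / e2 ∈ P₀ if e1 ∈ P₀ or (e1 ∈ P⊥ and e2 ∈ P₀)
  | choiceZero₁ {e1 e2 : Delta N char} : HasProp P e1 .zero → HasProp P (.choice e1 e2) .zero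
  | choiceZero₂ {e1 e2 : Delta N char} :
      HasProp P e1 .fail → HasProp P e2 .zero → HasProp P (.choice e1 e2) .zero
  | choiceFail {e1 e2 : Delta N char} :
      HasProp P e1 .fail → HasProp P e2 .fail → HasProp P (.choice e1 e2) .fail
  -- e1 / e2 ∈ P_{>0} if e1 ∈ P_{>0} or (e1 ∈ P⊥ and e2 ∈ P_{>0})
  | choicePos₁ {e1 e2 : Delta N char} : HasProp P e1 .pos → HasProp P (.choice e1 e2) .pos
  | choicePos₂ {e1 e2 : Delta N char} :
      HasProp P e1 .fail → HasProp P e2 .pos → HasProp P (.choice e1 e2) .pos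
  | notZero {e : Delta N char} : HasProp P e .fail → HasProp P (.pnot e) .zero
  -- !e ∈ P⊥ if e ∈ P₀ ∪ P_{>0}
  | notFail₁ {e : Delta N char} : HasProp P e .zero → HasProp P (.pnot e) .fail
  | notFail₂ {e : Delta N char} : HasProp P e .pos → HasProp P (.pnot e) .fail

theorem usem_suffix {N char : Type} {P : N → Delta N char}
    {e : Delta N char} {s : List char} {n : ℕ} {r : Option (List char)}
    (h : USem P e s n r) : ∀ s', r = some s' → s' <:+ s := by
  induction h with
  | eps s => rintro s' ⟨rfl⟩; exact List.suffix_refl _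
  | nonTerminal _ ih => exact ih
  | anyCharOk x xs => rintro s' ⟨rfl⟩; exact List.suffix_cons x xs
  | anyCharFail => rintro s' ⟨⟩
  | terminalOk a xs => rintro s' ⟨rfl⟩; exact List.suffix_cons a xs
  | terminalNil => rintro s' ⟨⟩
  | terminalMismatch => rintro s' ⟨⟩
  | seqFail₁ => rintro s' ⟨⟩
  | seqNext h1 h2 ih1 ih2 =>
      rintro t rfl; exact (ih2 t rfl).trans (ih1 _ rfl)
  | choiceOk h1 ih1 => rintro t ⟨rfl⟩; exact ih1 _ rfl
  | choiceFail₁ h1 h2 ih1 ih2 => rintro t rfl; exact ih2 t rfl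
  | starBase => rintro t ⟨rfl⟩; exact List.suffix_refl _
  | starStep h1 h2 ih1 ih2 =>
      rintro t ⟨rfl⟩; exact (ih2 _ rfl).trans (ih1 _ rfl)
  | notOk => rintro t ⟨rfl⟩; exact List.suffix_refl _
  | notFail => rintro t ⟨⟩

theorem hasProp_sound {N char : Type} {P : N → Delta N char}
    {e : Delta N char} {s : List char} {n : ℕ} {r : Option (List char)}
    (h : USem P e s n r) :
    (r = none → HasProp P e .fail) ∧
    (∀ s', r = some s' → (s' = s → HasProp P e .zero) ∧ (s' ≠ s → HasProp P e .pos)) := by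
  induction h with
  | eps s =>
      refine ⟨by rintro ⟨⟩, ?_⟩
      rintro s' ⟨rfl⟩
      exact ⟨fun _ => .eps, fun hne => absurd rfl hne⟩
  | nonTerminal _ ih =>
      refine ⟨fun hr => .nonTerminal (ih.1 hr), fun s' hr => ?_⟩
      exact ⟨fun he => .nonTerminal ((ih.2 s' hr).1 he),
             fun he => .nonTerminal ((ih.2 s' hr).2 he)⟩
  | anyCharOk x xs =>
      refine ⟨by rintro ⟨⟩, ?_⟩
      rintro s' ⟨rfl⟩
      exact ⟨fun he => absurd (congrArg List.length he) (by simp), fun _ => .anyCharPos⟩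
  | anyCharFail => exact ⟨fun _ => .anyCharFail, by rintro s' ⟨⟩⟩
  | terminalOk a xs =>
      refine ⟨by rintro ⟨⟩, ?_⟩
      rintro s' ⟨rfl⟩
      exact ⟨fun he => absurd (congrArg List.length he) (by simp), fun _ => .terminalPos a⟩
  | terminalNil a => exact ⟨fun _ => .terminalFail a, by rintro s' ⟨⟩⟩
  | terminalMismatch xs hne => exact ⟨fun _ => .terminalFail _, by rintro s' ⟨⟩⟩
  | seqFail₁ h1 ih1 =>
      exact ⟨fun _ => .seqFail₁ (ih1.1 rfl), by rintro s' ⟨⟩⟩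
  | @seqNext e1 e2 s s' m n' r h1 h2 ih1 ih2 =>
      have hsuf1 := usem_suffix h1 _ rfl
      refine ⟨?_, ?_⟩
      · intro hr
        have h2f := ih2.1 hr
        by_cases hs : s' = s
        · exact .seqFail₂ ((ih1.2 _ rfl).1 hs) h2f
        · exact .seqFail₃ ((ih1.2 _ rfl).2 hs) h2f
      · rintro t rfl
        have hsuf2 := usem_suffix h2 t rfl
        refine ⟨?_, ?_⟩
        · rintro rfl
          have hss : s' = t :=
            hsuf1.eq_of_length (hsuf1.length_le.antisymm hsuf2.length_le)
          subst hss
          exact .seqZero ((ih1.2 _ rfl).1 rfl) ((ih2.2 _ rfl).1 rfl)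
        · intro hts
          by_cases ht2 : t = s'
          · exact .seqPos₁ ((ih1.2 _ rfl).2 (ht2 ▸ hts)) ((ih2.2 t rfl).1 ht2)
          · by_cases hs1 : s' = s
            · exact .seqPos₃ ((ih1.2 _ rfl).1 hs1) ((ih2.2 t rfl).2 ht2)
            · exact .seqPos₂ ((ih1.2 _ rfl).2 hs1) ((ih2.2 t rfl).2 ht2)
  | choiceOk h1 ih1 =>
      refine ⟨by rintro ⟨⟩, ?_⟩
      rintro t ⟨rfl⟩
      exact ⟨fun he => .choiceZero₁ ((ih1.2 _ rfl).1 he),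
             fun he => .choicePos₁ ((ih1.2 _ rfl).2 he)⟩
  | choiceFail₁ h1 h2 ih1 ih2 =>
      have hf1 := ih1.1 rfl
      refine ⟨fun hr => .choiceFail hf1 (ih2.1 hr), ?_⟩
      intro t hr
      exact ⟨fun he => .choiceZero₂ hf1 ((ih2.2 t hr).1 he),
             fun he => .choicePos₂ hf1 ((ih2.2 t hr).2 he)⟩
  | starBase h1 ih1 =>
      refine ⟨by rintro ⟨⟩, ?_⟩
      rintro t ⟨rfl⟩
      exact ⟨fun _ => .starZero (ih1.1 rfl), fun hne => absurd rfl hne⟩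
  | @starStep e' s s' t m n' h1 h2 ih1 ih2 =>
      refine ⟨by rintro ⟨⟩, ?_⟩
      intro u hu
      cases hu
      have hsuf1 := usem_suffix h1 _ rfl
      have hsuf2 := usem_suffix h2 _ rfl
      refine ⟨?_, ?_⟩
      · rintro rfl
        have hss : s' = t :=
          hsuf1.eq_of_length (hsuf1.length_le.antisymm hsuf2.length_le)
        exact (ih2.2 _ rfl).1 hss.symm
      · intro hts
        by_cases ht2 : t = s'
        · exact .starPos ((ih1.2 _ rfl).2 (ht2 ▸ hts))
        · exact (ih2.2 t rfl).2 ht2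
  | notOk h1 ih1 =>
      refine ⟨by rintro ⟨⟩, ?_⟩
      rintro t ⟨rfl⟩
      exact ⟨fun _ => .notZero (ih1.1 rfl), fun hne => absurd rfl hne⟩
  | @notFail e' s s' m h1 ih1 =>
      refine ⟨fun _ => ?_, by rintro t ⟨⟩⟩
      by_cases hs : s' = s
      · exact .notFail₁ ((ih1.2 _ rfl).1 hs)
      · exact .notFail₂ ((ih1.2 _ rfl).2 hs)

/-- **Lemma 4, first item (soundness of the property "0").** If `⟦e,s⟧ ⇒ (n, ok s)`,
i.e. `e` succeeds on `s` leaving the whole input unconsumed, then `e ∈ P₀`. -/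
theorem hasProp_zero_sound {N char : Type} [Fintype N] (P : N → Delta N char)
    (e : Delta N char) (s : List char) (n : ℕ)
    (h : USem P e s n (some s)) : HasProp P e .zero := by
  exact ((hasProp_sound h).2 s rfl).1 rfl
end

section
/- Soundness of the property '>0' (Lemma 4, second item): for every parsing expression e, all strings s, s' and every step count n, if ⟦e,s⟧ ⇒ (n, ok s') and the length of s' is strictly smaller than the length of s (e succeeds consuming some input), then e ∈ P_{>0}. -/
lemma usem_length_le {N char : Type} {P : N → Delta N char}
    {e : Delta N char} {s s' : List char} {n : ℕ}
    (h : USem P e s n (some s')) : s'.length ≤ s.length := by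
  generalize hr : (some s' : Option (List char)) = r at h
  induction h generalizing s' with
  | eps => injection hr with h'; subst h'; rfl
  | nonTerminal _ ih => exact ih hr
  | anyCharOk => injection hr with h'; subst h'; simp
  | anyCharFail => exact absurd hr (by simp)
  | terminalOk => injection hr with h'; subst h'; simp
  | terminalNil => exact absurd hr (by simp)
  | terminalMismatch => exact absurd hr (by simp)
  | seqFail₁ => exact absurd hr (by simp)
  | seqNext h1 h2 ih1 ih2 => exact le_trans (ih2 hr) (ih1 rfl)
  | choiceOk _ ih => injection hr with h'; subst h'; exact ih rfl
  | choiceFail₁ _ _ _ ih => exact ih hr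
  | starBase => injection hr with h'; subst h'; rfl
  | starStep h1 h2 ih1 ih2 => exact le_trans (ih2 hr) (ih1 rfl)
  | notOk => injection hr with h'; subst h'; rfl
  | notFail => exact absurd hr (by simp)

/-- The property a result should witness. -/
def resProp (s : List char) : Option (List char) → PProp
  | none => .fail
  | some s' => if s'.length < s.length then .pos else .zero

lemma hasProp_sound_aux {N char : Type} {P : N → Delta N char}
    {e : Delta N char} {s : List char} {n : ℕ} {r : Option (List char)}
    (h : USem P e s n r) :
    HasProp P e (resProp s r) := by
  induction h with
  | eps s => simp [resProp]; exact .eps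
  | nonTerminal _ ih => exact .nonTerminal ih
  | anyCharOk x xs => simp [resProp]; exact .anyCharPos
  | anyCharFail => exact .anyCharFail
  | terminalOk a xs => simp [resProp]; exact .terminalPos a
  | terminalNil a => exact .terminalFail a
  | terminalMismatch xs hx => exact .terminalFail _
  | seqFail₁ _ ih => exact .seqFail₁ ih
  | @seqNext e1 e2 s s' m n' r h1 h2 ih1 ih2 =>
    have hle1 := usem_length_le h1
    cases r with
    | none =>
      simp only [resProp] at ih2
      by_cases hlt : s'.length < s.length
      · simp only [resProp, hlt] at ih1; exact .seqFail₃ ih1 ih2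
      · simp only [resProp, hlt] at ih1; exact .seqFail₂ ih1 ih2
    | some s'' =>
      have hle2 := usem_length_le h2
      simp only [resProp] at ih1 ih2 ⊢
      by_cases h1lt : s'.length < s.length <;>
        by_cases h2lt : s''.length < s'.length <;>
        simp only [resProp, h1lt, h2lt] at ih1 ih2
      · rw [if_pos (show s''.length < s.length by omega)]; exact .seqPos₂ ih1 ih2
      · rw [if_pos (show s''.length < s.length by omega)]; exact .seqPos₁ ih1 ih2
      · rw [if_pos (show s''.length < s.length by omega)]; exact .seqPos₃ ih1 ih2
      · rw [if_neg (show ¬ s''.length < s.length by omega)]; exact .seqZero ih1 ih2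
  | choiceOk _ ih =>
    simp only [resProp] at ih ⊢
    split at ih
    · rw [if_pos (by assumption)]; exact .choicePos₁ ih
    · rw [if_neg (by assumption)]; exact .choiceZero₁ ih
  | choiceFail₁ _ _ ih1 ih2 =>
    cases ‹Option (List char)› with
    | none => exact .choiceFail ih1 ih2
    | some s'' =>
      simp only [resProp] at ih2 ⊢
      split at ih2
      · rw [if_pos (by assumption)]; exact .choicePos₂ ih1 ih2
      · rw [if_neg (by assumption)]; exact .choiceZero₂ ih1 ih2
  | starBase _ ih => simp [resProp]; exact .starZero ih
  | @starStep e s s' s'' m n' h1 h2 ih1 ih2 =>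
    have hle1 := usem_length_le h1
    have hle2 := usem_length_le h2
    simp only [resProp] at ih1 ih2 ⊢
    by_cases h1lt : s'.length < s.length
    · simp only [resProp, h1lt] at ih1
      rw [if_pos (by omega)]; exact .starPos ih1
    · by_cases h2lt : s''.length < s'.length
      · simp only [resProp, h2lt] at ih2; rw [if_pos (by omega)]; exact ih2
      · simp only [resProp, h2lt] at ih2; rw [if_neg (by omega)]; exact ih2
  | notOk _ ih => simp [resProp]; exact .notZero ih
  | @notFail e s s' m h1 ih =>
    simp only [resProp] at ih
    split at ih
    · exact .notFail₂ ih
    · exact .notFail₁ ih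

/-- **Lemma 4, second item (soundness of the property ">0").** If
`⟦e,s⟧ ⇒ (n, ok s')` with `|s'| < |s|`, i.e. `e` succeeds on `s` consuming some
input, then `e ∈ P_{>0}`. -/
theorem hasProp_pos_sound {N char : Type} [Fintype N] (P : N → Delta N char)
    (e : Delta N char) (s s' : List char) (n : ℕ)
    (h : USem P e s n (some s')) (hlt : s'.length < s.length) : HasProp P e .pos := by
  have := hasProp_sound_aux h
  simpa [resProp, hlt] using this
end

section
/- Well-formedness implies completeness (Theorem 5): if the grammar G is well-formed, i.e. every expression e ∈ E(G) is in WF, then G is complete: for every e ∈ E(G) and every string s there exist a step count n and a result r such that ⟦e,s⟧ ⇒ (n, r); in particular parsing never diverges: on every input the grammar either succeeds or fails. -/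
/-- Well-formed parsing expressions: the least set closed under the rules of the
well-formedness analysis. -/
inductive WFexp {N char : Type} (P : N → Delta N char) : Delta N char → Prop where
  | nonTerminal {A : N} : WFexp P (P A) → WFexp P (.nonTerminal A)
  | eps : WFexp P .eps
  | anyChar : WFexp P .anyChar
  | terminal (a : char) : WFexp P (.terminal a)
  | pnot {e : Delta N char} : WFexp P e → WFexp P (.pnot e)
  | seq {e1 e2 : Delta N char} :
      WFexp P e1 → (HasProp P e1 .zero → WFexp P e2) → WFexp P (.seq e1 e2)
  | choice {e1 e2 : Delta N char} : WFexp P e1 → WFexp P e2 → WFexp P (.choice e1 e2)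
  | star {e : Delta N char} : WFexp P e → ¬ HasProp P e .zero → WFexp P (.star e)

/-- The finite set of all (non-strict) subexpressions of a parsing expression. -/
def subExps {N char : Type} [DecidableEq N] [DecidableEq char] :
    Delta N char → Finset (Delta N char)
  | .eps => {.eps}
  | .anyChar => {.anyChar}
  | .terminal a => {.terminal a}
  | .nonTerminal A => {.nonTerminal A}
  | .seq e1 e2 => insert (.seq e1 e2) (subExps e1 ∪ subExps e2)
  | .choice e1 e2 => insert (.choice e1 e2) (subExps e1 ∪ subExps e2)
  | .star e => insert (.star e) (subExps e)
  | .pnot e => insert (.pnot e) (subExps e)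

/-- The expression set E(G) of the grammar: all subexpressions of `P A`, over all
non-terminals `A`. -/
def EG {N char : Type} [Fintype N] [DecidableEq N] [DecidableEq char]
    (P : N → Delta N char) : Finset (Delta N char) :=
  Finset.univ.biUnion fun A => subExps (P A)

/-- `OneStep P S e` : `e` is derivable as well-formed in one step from the
expressions in `S`. -/
def OneStep {N char : Type} [DecidableEq N] [DecidableEq char]
    (P : N → Delta N char) (S : Finset (Delta N char)) : Delta N char → Prop
  | .eps => True
  | .anyChar => True
  | .terminal _ => True
  | .nonTerminal A => P A ∈ S
  | .pnot e => e ∈ S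
  | .seq e1 e2 => e1 ∈ S ∧ (HasProp P e1 .zero → e2 ∈ S)
  | .choice e1 e2 => e1 ∈ S ∧ e2 ∈ S
  | .star e => e ∈ S ∧ ¬ HasProp P e .zero

open Classical in
/-- One step of the well-formedness fixpoint computation: extend `S` by all
expressions of E(G) derivable in one step from `S`. -/
noncomputable def deriveStep {N char : Type} [Fintype N] [DecidableEq N] [DecidableEq char]
    (P : N → Delta N char) (S : Finset (Delta N char)) : Finset (Delta N char) :=
  S ∪ (EG P).filter (OneStep P S)

lemma mem_subExps_self {N char : Type} [DecidableEq N] [DecidableEq char]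
    (e : Delta N char) : e ∈ subExps e := by
  cases e <;> simp [subExps]

lemma subExps_subset {N char : Type} [DecidableEq N] [DecidableEq char]
    {d e : Delta N char} (h : e ∈ subExps d) : subExps e ⊆ subExps d := by
  induction d with
  | eps => simp [subExps] at h; subst h; exact subset_rfl
  | anyChar => simp [subExps] at h; subst h; exact subset_rfl
  | terminal a => simp [subExps] at h; subst h; exact subset_rfl
  | nonTerminal A => simp [subExps] at h; subst h; exact subset_rfl
  | seq e1 e2 ih1 ih2 =>
    simp [subExps] at h
    rcases h with h | h | h
    · subst h; exact subset_rfl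
    · exact (ih1 h).trans (by intro x hx; simp [subExps]; right; left; exact hx)
    · exact (ih2 h).trans (by intro x hx; simp [subExps]; right; right; exact hx)
  | choice e1 e2 ih1 ih2 =>
    simp [subExps] at h
    rcases h with h | h | h
    · subst h; exact subset_rfl
    · exact (ih1 h).trans (by intro x hx; simp [subExps]; right; left; exact hx)
    · exact (ih2 h).trans (by intro x hx; simp [subExps]; right; right; exact hx)
  | star e ih =>
    simp [subExps] at h
    rcases h with h | h
    · subst h; exact subset_rfl
    · exact (ih h).trans (by intro x hx; simp [subExps]; right; exact hx)
  | pnot e ih =>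
    simp [subExps] at h
    rcases h with h | h
    · subst h; exact subset_rfl
    · exact (ih h).trans (by intro x hx; simp [subExps]; right; exact hx)

lemma mem_EG_of_sub {N char : Type} [Fintype N] [DecidableEq N] [DecidableEq char]
    {P : N → Delta N char} {d e : Delta N char} (hd : d ∈ EG P) (h : e ∈ subExps d) :
    e ∈ EG P := by
  simp [EG] at hd ⊢
  obtain ⟨A, hA⟩ := hd
  exact ⟨A, subExps_subset hA h⟩

lemma PA_mem_EG {N char : Type} [Fintype N] [DecidableEq N] [DecidableEq char]
    (P : N → Delta N char) (A : N) : P A ∈ EG P := by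
  simp [EG]
  exact ⟨A, mem_subExps_self _⟩

lemma usem_sound {N char : Type} {P : N → Delta N char} {e : Delta N char} {s : List char}
    {n : ℕ} {r : Option (List char)} (h : USem P e s n r) :
    (r = none → HasProp P e .fail) ∧
    (∀ s', r = some s' → s' <:+ s ∧ (s' = s → HasProp P e .zero) ∧
      (s' ≠ s → HasProp P e .pos)) := by
  induction h with
  | eps s =>
    refine ⟨by simp, ?_⟩
    rintro s' ⟨rfl⟩
    exact ⟨List.suffix_refl _, fun _ => .eps, fun h => absurd rfl h⟩
  | nonTerminal h ih =>
    refine ⟨fun hn => .nonTerminal (ih.1 hn), ?_⟩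
    intro s' hs'
    obtain ⟨hsuf, hz, hp⟩ := ih.2 s' hs'
    exact ⟨hsuf, fun h => .nonTerminal (hz h), fun h => .nonTerminal (hp h)⟩
  | anyCharOk x xs =>
    refine ⟨by simp, ?_⟩
    rintro s' ⟨rfl⟩
    exact ⟨List.suffix_cons x xs, fun h => absurd h (by simp), fun _ => .anyCharPos⟩
  | anyCharFail => exact ⟨fun _ => .anyCharFail, by simp⟩
  | terminalOk a xs =>
    refine ⟨by simp, ?_⟩
    rintro s' ⟨rfl⟩
    exact ⟨List.suffix_cons a xs, fun h => absurd h (by simp), fun _ => .terminalPos a⟩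
  | terminalNil a => exact ⟨fun _ => .terminalFail a, by simp⟩
  | terminalMismatch xs h => exact ⟨fun _ => .terminalFail _, by simp⟩
  | seqFail₁ h1 ih => exact ⟨fun _ => .seqFail₁ (ih.1 rfl), by simp⟩
  | seqNext h1 h2 ih1 ih2 =>
    obtain ⟨hsuf1, hz1, hp1⟩ := ih1.2 _ rfl
    rename_i e1 e2 s s1 m n r
    constructor
    · intro hn
      by_cases hss : s1 = s
      · exact .seqFail₂ (hz1 hss) (ih2.1 hn)
      · exact .seqFail₃ (hp1 hss) (ih2.1 hn)
    · intro s' hs'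
      obtain ⟨hsuf2, hz2, hp2⟩ := ih2.2 s' hs'
      refine ⟨hsuf2.trans hsuf1, ?_, ?_⟩
      · intro hss; subst hss
        have h1s : s1 = s' := hsuf1.eq_of_length
          (le_antisymm hsuf1.length_le hsuf2.length_le)
        exact .seqZero (hz1 h1s) (hz2 h1s.symm)
      · intro hne
        by_cases hss : s1 = s
        · subst hss
          exact .seqPos₃ (hz1 rfl) (hp2 hne)
        · by_cases hss2 : s' = s1
          · exact .seqPos₁ (hp1 hss) (hz2 hss2)
          · exact .seqPos₂ (hp1 hss) (hp2 hss2)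
  | choiceOk h1 ih =>
    refine ⟨by simp, ?_⟩
    rintro s' ⟨rfl⟩
    obtain ⟨hsuf, hz, hp⟩ := ih.2 _ rfl
    exact ⟨hsuf, fun h => .choiceZero₁ (hz h), fun h => .choicePos₁ (hp h)⟩
  | choiceFail₁ h1 h2 ih1 ih2 =>
    have hf1 : HasProp P _ .fail := ih1.1 rfl
    refine ⟨fun hn => .choiceFail hf1 (ih2.1 hn), ?_⟩
    intro s' hs'
    obtain ⟨hsuf, hz, hp⟩ := ih2.2 s' hs'
    exact ⟨hsuf, fun h => .choiceZero₂ hf1 (hz h), fun h => .choicePos₂ hf1 (hp h)⟩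
  | starBase h ih =>
    refine ⟨by simp, ?_⟩
    rintro s' ⟨rfl⟩
    exact ⟨List.suffix_refl _, fun _ => .starZero (ih.1 rfl), fun h => absurd rfl h⟩
  | starStep h1 h2 ih1 ih2 =>
    refine ⟨by simp, ?_⟩
    rintro s' ⟨rfl⟩
    rename_i e s s1 s2 m n
    obtain ⟨hsuf1, hz1, hp1⟩ := ih1.2 _ rfl
    obtain ⟨hsuf2, hz2, hp2⟩ := ih2.2 _ rfl
    refine ⟨hsuf2.trans hsuf1, ?_, ?_⟩
    · intro hss; subst hss
      have h1s : s1 = s2 := hsuf1.eq_of_length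
        (le_antisymm hsuf1.length_le hsuf2.length_le)
      exact hz2 h1s.symm
    · intro hne
      by_cases hss : s1 = s
      · subst hss
        exact hp2 hne
      · exact .starPos (hp1 hss)
  | notOk h ih =>
    refine ⟨by simp, ?_⟩
    rintro s' ⟨rfl⟩
    exact ⟨List.suffix_refl _, fun _ => .notZero (ih.1 rfl), fun h => absurd rfl h⟩
  | notFail h ih =>
    rename_i e s s1 m
    refine ⟨?_, by simp⟩
    intro _
    obtain ⟨hsuf, hz, hp⟩ := ih.2 _ rfl
    by_cases hss : s1 = s
    · exact .notFail₁ (hz hss)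
    · exact .notFail₂ (hp hss)

lemma star_some {N char : Type} {P : N → Delta N char} {e : Delta N char} {s : List char}
    {n : ℕ} {r : Option (List char)} (h : USem P (.star e) s n r) :
    ∃ s', r = some s' := by
  cases h <;> exact ⟨_, rfl⟩

/-- **Theorem 5 (Well-formedness implies completeness).** If every expression of
E(G) is well-formed, then the grammar is complete: every expression of E(G) has a
defined parsing result on every input string; parsing never diverges. -/
theorem wellFormed_complete {N char : Type} [Fintype N] [DecidableEq N] [DecidableEq char]
    (P : N → Delta N char)
    (hwf : ∀ e ∈ EG P, WFexp P e) :
    ∀ e ∈ EG P, ∀ s : List char, ∃ (n : ℕ) (r : Option (List char)), USem P e s n r := by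
  have key : ∀ k : ℕ, ∀ s : List char, s.length < k →
      ∀ e ∈ EG P, ∃ (n : ℕ) (r : Option (List char)), USem P e s n r := by
    intro k
    induction k with
    | zero => intro s hs; omega
    | succ k ih =>
      intro s hs e he
      have hw := hwf e he
      clear hwf
      revert he
      induction hw with
      | eps => exact fun _ => ⟨1, some s, .eps s⟩
      | anyChar =>
        intro _
        cases s with
        | nil => exact ⟨1, none, .anyCharFail⟩
        | cons x xs => exact ⟨1, some xs, .anyCharOk x xs⟩
      | terminal a =>
        intro _
        cases s with
        | nil => exact ⟨1, none, .terminalNil a⟩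
        | cons x xs =>
          by_cases hxa : x = a
          · subst hxa; exact ⟨1, some xs, .terminalOk x xs⟩
          · exact ⟨1, none, .terminalMismatch xs hxa⟩
      | nonTerminal hPA ihPA =>
        intro _
        obtain ⟨n, r, hr⟩ := ihPA (PA_mem_EG P _)
        exact ⟨n + 1, r, .nonTerminal hr⟩
      | pnot hwe ihe =>
        intro he
        obtain ⟨n, r, hr⟩ := ihe (mem_EG_of_sub he (by simp [subExps, mem_subExps_self]))
        cases r with
        | none => exact ⟨n + 1, some s, .notOk hr⟩
        | some s' => exact ⟨n + 1, none, .notFail hr⟩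
      | seq hw1 hw2 ih1 ih2 =>
        intro he
        rename_i e1 e2
        have he1 : e1 ∈ EG P := mem_EG_of_sub he (by simp [subExps, mem_subExps_self])
        have he2 : e2 ∈ EG P := mem_EG_of_sub he (by simp [subExps, mem_subExps_self])
        obtain ⟨m, r1, hr1⟩ := ih1 he1
        cases r1 with
        | none => exact ⟨m + 1, none, .seqFail₁ hr1⟩
        | some s' =>
          obtain ⟨hsuf, hz, _⟩ := (usem_sound hr1).2 s' rfl
          by_cases hss : s' = s
          · subst hss
            obtain ⟨n2, r2, hr2⟩ := ih2 (hz rfl) he2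
            exact ⟨m + n2 + 1, r2, .seqNext hr1 hr2⟩
          · have hlt : s'.length < s.length :=
              lt_of_le_of_ne hsuf.length_le fun h => hss (hsuf.eq_of_length h)
            obtain ⟨n2, r2, hr2⟩ := ih s' (by omega) e2 he2
            exact ⟨m + n2 + 1, r2, .seqNext hr1 hr2⟩
      | choice hw1 hw2 ih1 ih2 =>
        intro he
        rename_i e1 e2
        have he1 : e1 ∈ EG P := mem_EG_of_sub he (by simp [subExps, mem_subExps_self])
        have he2 : e2 ∈ EG P := mem_EG_of_sub he (by simp [subExps, mem_subExps_self])
        obtain ⟨m, r1, hr1⟩ := ih1 he1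
        cases r1 with
        | some s' => exact ⟨m + 1, some s', .choiceOk hr1⟩
        | none =>
          obtain ⟨n2, r2, hr2⟩ := ih2 he2
          exact ⟨m + n2 + 1, r2, .choiceFail₁ hr1 hr2⟩
      | star hwe hnz ihe =>
        intro he
        rename_i e
        obtain ⟨m, r, hr⟩ := ihe (mem_EG_of_sub he (by simp [subExps, mem_subExps_self]))
        cases r with
        | none => exact ⟨m + 1, some s, .starBase hr⟩
        | some s' =>
          obtain ⟨hsuf, hz, _⟩ := (usem_sound hr).2 s' rfl
          by_cases hss : s' = s
          · exact absurd (hz hss) hnz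
          · have hlt : s'.length < s.length :=
              lt_of_le_of_ne hsuf.length_le fun h => hss (hsuf.eq_of_length h)
            obtain ⟨n2, r2, hr2⟩ := ih s' (by omega) (.star e) he
            obtain ⟨s'', rfl⟩ := star_some hr2
            exact ⟨m + n2 + 1, some s'', .starStep hr hr2⟩
  intro e he s
  exact key (s.length + 1) s (by omega) e he
end

section
/- Unambiguity of untyped PEG parsing: for every parsing expression e and every string s, if ⟦e,s⟧ ⇒ (m1, r1) and ⟦e,s⟧ ⇒ (m2, r2) then m1 = m2 and r1 = r2; as a consequence, a PEG is unambiguous: for each expression and input string there is at most one parsing result. -/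
/-- **Unambiguity of untyped PEG parsing:** the semantics relation is deterministic
in both the step count and the result; for each expression and input string there is
at most one parsing result. -/
theorem peg_unambiguous {N char : Type} [Fintype N] (P : N → Delta N char)
    (e : Delta N char) (s : List char)
    (m1 m2 : ℕ) (r1 r2 : Option (List char))
    (h1 : USem P e s m1 r1) (h2 : USem P e s m2 r2) : m1 = m2 ∧ r1 = r2 := by
  induction h1 generalizing m2 r2 with
  | eps s => cases h2; exact ⟨rfl, rfl⟩
  | nonTerminal h ih =>
    cases h2 with
    | nonTerminal h' => obtain ⟨e1, e2⟩ := ih _ _ h'; exact ⟨by omega, e2⟩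
  | anyCharOk x xs => cases h2; exact ⟨rfl, rfl⟩
  | anyCharFail => cases h2; exact ⟨rfl, rfl⟩
  | terminalOk a xs =>
    cases h2 with
    | terminalOk => exact ⟨rfl, rfl⟩
    | terminalMismatch _ h => exact absurd rfl h
  | terminalNil a => cases h2; exact ⟨rfl, rfl⟩
  | terminalMismatch xs h =>
    cases h2 with
    | terminalOk => exact absurd rfl h
    | terminalMismatch => exact ⟨rfl, rfl⟩
  | seqFail₁ h ih =>
    cases h2 with
    | seqFail₁ h' => obtain ⟨e1, e2⟩ := ih _ _ h'; exact ⟨by omega, rfl⟩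
    | seqNext h' _ => obtain ⟨_, e2⟩ := ih _ _ h'; cases e2
  | seqNext h1 h2' ih1 ih2 =>
    cases h2 with
    | seqFail₁ h' => obtain ⟨_, e2⟩ := ih1 _ _ h'; cases e2
    | seqNext ha hb =>
      obtain ⟨ea, eb⟩ := ih1 _ _ ha
      cases eb
      obtain ⟨ec, ed⟩ := ih2 _ _ hb
      exact ⟨by omega, ed⟩
  | choiceOk h ih =>
    cases h2 with
    | choiceOk h' => obtain ⟨e1, e2⟩ := ih _ _ h'; exact ⟨by omega, e2⟩
    | choiceFail₁ h' _ => obtain ⟨_, e2⟩ := ih _ _ h'; cases e2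
  | choiceFail₁ h1 h2' ih1 ih2 =>
    cases h2 with
    | choiceOk h' => obtain ⟨_, e2⟩ := ih1 _ _ h'; cases e2
    | choiceFail₁ ha hb =>
      obtain ⟨ea, _⟩ := ih1 _ _ ha
      obtain ⟨ec, ed⟩ := ih2 _ _ hb
      exact ⟨by omega, ed⟩
  | starBase h ih =>
    cases h2 with
    | starBase h' => obtain ⟨e1, _⟩ := ih _ _ h'; exact ⟨by omega, rfl⟩
    | starStep h' _ => obtain ⟨_, e2⟩ := ih _ _ h'; cases e2
  | starStep h1 h2' ih1 ih2 =>
    cases h2 with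
    | starBase h' => obtain ⟨_, e2⟩ := ih1 _ _ h'; cases e2
    | starStep ha hb =>
      obtain ⟨ea, eb⟩ := ih1 _ _ ha
      cases eb
      obtain ⟨ec, ed⟩ := ih2 _ _ hb
      exact ⟨by omega, ed⟩
  | notOk h ih =>
    cases h2 with
    | notOk h' => obtain ⟨e1, _⟩ := ih _ _ h'; exact ⟨by omega, rfl⟩
    | notFail h' => obtain ⟨_, e2⟩ := ih _ _ h'; cases e2
  | notFail h ih =>
    cases h2 with
    | notOk h' => obtain ⟨_, e2⟩ := ih _ _ h'; cases e2
    | notFail h' => obtain ⟨e1, _⟩ := ih _ _ h'; exact ⟨by omega, rfl⟩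
end
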